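/- arXiv:1904.11614 — 5 statements merged into one kernel-verified Lean document; each statement's English description precedes it below -/
import Mathlib

section
/- The map φ_{α,β} is a difference isomorphism between the difference fields (F(y,z), τ) and (F(y,z), σ_y), where τ = σ_y^β ∘ σ_z^{−α}; that is, σ_y ∘ φ_{α,β} = φ_{α,β} ∘ τ. -/
/-!
Both `σ_y ∘ φ` and `φ ∘ τ` are ring homomorphisms out of `F(y,z)`, so it suffices to compare them
on `F`, `y` and `z`. Since `σ_y` and `σ_z` shift one variable and fix the other, `τ` fixes `F` and
sends `y ↦ y + β`, `z ↦ z - α`; then `σ_y (φ y) = β (y + 1) = φ (y + β)` and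
`σ_y (φ z) = β⁻¹ z - α (y + 1) = φ (z - α)`.
-/

open scoped Polynomial nonZeroDivisors

namespace RatFunc

theorem ringHom_ext_of_C_X {K P : Type*} [Field K] [Semiring P] {f g : RatFunc K →+* P}
    (hC : f.comp C = g.comp C) (hX : f X = g X) : f = g := by
  apply IsLocalization.ringHom_ext K[X]⁰
  apply Polynomial.ringHom_ext
  · simpa [algebraMap_C] using RingHom.congr_fun hC
  · simpa [algebraMap_X] using hX

theorem ringHom_ext_of_C_C_X {F P : Type*} [Field F] [Semiring P]
    {f g : RatFunc (RatFunc F) →+* P} (hC : ∀ c : F, f (C (C c)) = g (C (C c)))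
    (hy : f (C X) = g (C X)) (hz : f X = g X) : f = g :=
  ringHom_ext_of_C_X (ringHom_ext_of_C_X (RingHom.ext hC) hy) hz

end RatFunc

namespace RingEquiv

variable {R : Type*}

theorem zpow_apply_eq_self [Semiring R] {e : R ≃+* R} {a : R} (ha : e a = a) (n : ℤ) :
    (e ^ n) a = a := by
  have h := Equiv.Perm.zpow_apply_eq_self_of_apply_eq_self (f := RingAut.toPerm R e) ha n
  rw [← map_zpow] at h
  exact h

theorem zpow_apply_eq_add_intCast [Ring R] {e : R ≃+* R} {a : R} (ha : e a = a + 1) (n : ℤ) :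
    (e ^ n) a = a + n := by
  have ha' : e⁻¹ a = a - 1 := e.symm_apply_eq.2 (by rw [map_sub, ha, map_one, add_sub_cancel_right])
  induction n using Int.induction_on with
  | zero => simp
  | succ k ih =>
    rw [zpow_add_one, RingAut.mul_apply, ha, map_add, map_one, ih]
    push_cast
    abel
  | pred k ih =>
    rw [zpow_sub_one, RingAut.mul_apply, ha', map_sub, map_one, ih]
    push_cast
    abel

end RingEquiv

theorem phi_is_difference_isomorphism_general {F : Type*} [Field F]
    (α β : ℤ)
    (σy σz φ : RatFunc (RatFunc F) ≃+* RatFunc (RatFunc F))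
    (hσyF : ∀ c : F, σy (RatFunc.C (RatFunc.C c)) = RatFunc.C (RatFunc.C c))
    (hσyy : σy (RatFunc.C (RatFunc.X : RatFunc F)) = RatFunc.C (RatFunc.X : RatFunc F) + 1)
    (hσyz : σy RatFunc.X = RatFunc.X)
    (hσzF : ∀ c : F, σz (RatFunc.C (RatFunc.C c)) = RatFunc.C (RatFunc.C c))
    (hσzy : σz (RatFunc.C (RatFunc.X : RatFunc F)) = RatFunc.C (RatFunc.X : RatFunc F))
    (hσzz : σz RatFunc.X = RatFunc.X + 1)
    (hφF : ∀ c : F, φ (RatFunc.C (RatFunc.C c)) = RatFunc.C (RatFunc.C c))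
    (hφy : φ (RatFunc.C (RatFunc.X : RatFunc F)) =
      (β : RatFunc (RatFunc F)) * RatFunc.C (RatFunc.X : RatFunc F))
    (hφz : φ RatFunc.X =
      (β : RatFunc (RatFunc F))⁻¹ * RatFunc.X -
        (α : RatFunc (RatFunc F)) * RatFunc.C (RatFunc.X : RatFunc F)) :
    ∀ f : RatFunc (RatFunc F), σy (φ f) = φ ((σy ^ β * σz ^ (-α)) f) := by
  set y : RatFunc (RatFunc F) := RatFunc.C RatFunc.X
  set z : RatFunc (RatFunc F) := RatFunc.X
  set τ := σy ^ β * σz ^ (-α)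
  have hτF (c : F) : τ (RatFunc.C (RatFunc.C c)) = RatFunc.C (RatFunc.C c) := by
    simp only [τ, RingAut.mul_apply, RingEquiv.zpow_apply_eq_self (hσzF c),
      RingEquiv.zpow_apply_eq_self (hσyF c)]
  have hτy : τ y = y + β := by
    simp only [τ, RingAut.mul_apply, RingEquiv.zpow_apply_eq_self hσzy,
      RingEquiv.zpow_apply_eq_add_intCast hσyy]
  have hτz : τ z = z - α := by
    rw [RingAut.mul_apply, RingEquiv.zpow_apply_eq_add_intCast hσzz, map_add, map_intCast,
      RingEquiv.zpow_apply_eq_self hσyz, Int.cast_neg, sub_eq_add_neg]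
  have hcomm : σy.toRingHom.comp φ.toRingHom = φ.toRingHom.comp τ.toRingHom := by
    refine RatFunc.ringHom_ext_of_C_C_X (fun c ↦ ?_) ?_ ?_
    · change σy (φ (RatFunc.C (RatFunc.C c))) = φ (τ (RatFunc.C (RatFunc.C c)))
      rw [hφF, hσyF, hτF, hφF]
    · change σy (φ y) = φ (τ y)
      rw [hφy, hτy, map_mul, map_intCast, hσyy, map_add, map_intCast, hφy]
      ring
    · change σy (φ z) = φ (τ z)
      rw [hφz, hτz, map_sub, map_mul, map_inv₀, map_intCast, hσyz, map_mul, map_intCast, hσyy,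
        map_sub, map_intCast, hφz]
      ring
  exact RingHom.congr_fun hcomm

/-- `φ_{α,β}` is a difference isomorphism between `(F(y,z), τ)` and `(F(y,z), σ_y)`,
where `τ = σ_y^β σ_z^{-α}`: that is, `σ_y ∘ φ_{α,β} = φ_{α,β} ∘ τ`. Here
`F(y,z)` is modeled as `RatFunc (RatFunc F)` with `y = RatFunc.C RatFunc.X` and
`z = RatFunc.X`, the automorphisms `σ_y`, `σ_z` are characterized by fixing `F` and
shifting `y`, resp. `z`, by `1`, and `φ = φ_{α,β}` is the `F`-automorphism with
`φ(y) = β y` and `φ(z) = β⁻¹ z - α y`. -/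
theorem phi_is_difference_isomorphism {F : Type*} [Field F] [CharZero F]
    (α β : ℤ) (hβ : β ≠ 0)
    (σy σz φ : RatFunc (RatFunc F) ≃+* RatFunc (RatFunc F))
    (hσyF : ∀ c : F, σy (RatFunc.C (RatFunc.C c)) = RatFunc.C (RatFunc.C c))
    (hσyy : σy (RatFunc.C (RatFunc.X : RatFunc F)) = RatFunc.C (RatFunc.X : RatFunc F) + 1)
    (hσyz : σy RatFunc.X = RatFunc.X)
    (hσzF : ∀ c : F, σz (RatFunc.C (RatFunc.C c)) = RatFunc.C (RatFunc.C c))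
    (hσzy : σz (RatFunc.C (RatFunc.X : RatFunc F)) = RatFunc.C (RatFunc.X : RatFunc F))
    (hσzz : σz RatFunc.X = RatFunc.X + 1)
    (hφF : ∀ c : F, φ (RatFunc.C (RatFunc.C c)) = RatFunc.C (RatFunc.C c))
    (hφy : φ (RatFunc.C (RatFunc.X : RatFunc F)) =
      (β : RatFunc (RatFunc F)) * RatFunc.C (RatFunc.X : RatFunc F))
    (hφz : φ RatFunc.X =
      (β : RatFunc (RatFunc F))⁻¹ * RatFunc.X -
        (α : RatFunc (RatFunc F)) * RatFunc.C (RatFunc.X : RatFunc F)) :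
    ∀ f : RatFunc (RatFunc F), σy (φ f) = φ ((σy ^ β * σz ^ (-α)) f) :=
  phi_is_difference_isomorphism_general α β σy σz φ hσyF hσyy hσyz hσzF hσzy hσzz hφF hφy hφz
end

section
/- A rational function f ∈ F(y,z) is τ-summable (i.e., f = τ(g) − g for some g ∈ F(y,z), where τ = σ_y^β σ_z^{−α}) if and only if φ_{α,β}(f) is σ_y-summable (i.e., φ_{α,β}(f) = σ_y(h) − h for some h ∈ F(y,z)). -/
private lemma ratfunc_hom_ext {K L : Type*} [Field K] [Field L]
    (f g : RatFunc K →+* L)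
    (hC : ∀ c : K, f (RatFunc.C c) = g (RatFunc.C c))
    (hX : f RatFunc.X = g RatFunc.X) : f = g := by
  have hpoly : f.comp (algebraMap (Polynomial K) (RatFunc K)) =
      g.comp (algebraMap (Polynomial K) (RatFunc K)) := by
    apply Polynomial.ringHom_ext
    · intro c
      simpa [RatFunc.algebraMap_C] using hC c
    · simpa [RatFunc.algebraMap_X] using hX
  have hp : ∀ p : Polynomial K,
      f (algebraMap (Polynomial K) (RatFunc K) p) = g (algebraMap (Polynomial K) (RatFunc K) p) :=
    fun p => congrFun (congrArg (fun h => h.toFun) hpoly) p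
  ext x
  induction x using RatFunc.induction_on with
  | f p q hq => rw [map_div₀, map_div₀, hp p, hp q]

private lemma zpow_fixed {R : Type*} [CommRing R] (e : R ≃+* R) (b : R)
    (h : e b = b) (n : ℤ) : (e ^ n) b = b := by
  have hsymm : e.symm b = b := by
    conv_lhs => rw [← h]
    exact e.symm_apply_apply b
  induction n using Int.induction_on with
  | zero => rfl
  | succ n ih =>
    rw [zpow_add_one]
    show (e ^ (n : ℤ)) (e b) = b
    rw [h, ih]
  | pred n ih =>
    rw [zpow_sub_one]
    show (e ^ (-n : ℤ)) (e⁻¹ b) = b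
    show (e ^ (-n : ℤ)) (e.symm b) = b
    rw [hsymm, ih]

private lemma zpow_shift {R : Type*} [CommRing R] (e : R ≃+* R) (a : R)
    (h : e a = a + 1) (n : ℤ) : (e ^ n) a = a + n := by
  have hsymm : e.symm a = a - 1 := by
    have h1 : e (a - 1) = a := by rw [map_sub, h, map_one]; ring
    have h2 : e.symm (e (a - 1)) = e.symm a := congrArg e.symm h1
    rw [e.symm_apply_apply] at h2
    exact h2.symm
  induction n using Int.induction_on with
  | zero => show a = a + ((0:ℤ):R); simp
  | succ n ih =>
    rw [zpow_add_one]
    show (e ^ (n : ℤ)) (e a) = _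
    rw [h, map_add, map_one, ih]
    push_cast; ring
  | pred n ih =>
    rw [zpow_sub_one]
    show (e ^ (-n : ℤ)) (e⁻¹ a) = _
    show (e ^ (-n : ℤ)) (e.symm a) = _
    rw [hsymm, map_sub, map_one, ih]
    push_cast; ring

/-- A rational function `f ∈ F(y,z)` is `τ`-summable for `τ = σ_y^β σ_z^{-α}` if and
only if `φ_{α,β}(f)` is `σ_y`-summable. `F(y,z)` is modeled as `RatFunc (RatFunc F)`
with `y = RatFunc.C RatFunc.X`, `z = RatFunc.X`; `σ_y`, `σ_z` are the shift
automorphisms and `φ = φ_{α,β}` the `F`-automorphism with `φ(y) = β y`,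
`φ(z) = β⁻¹ z - α y`, all characterized by their values on `F`, `y`, `z`. -/
theorem tau_summable_iff_phi_sigma_y_summable {F : Type*} [Field F] [CharZero F]
    (α β : ℤ) (hβ : β ≠ 0)
    (σy σz φ : RatFunc (RatFunc F) ≃+* RatFunc (RatFunc F))
    (hσyF : ∀ c : F, σy (RatFunc.C (RatFunc.C c)) = RatFunc.C (RatFunc.C c))
    (hσyy : σy (RatFunc.C (RatFunc.X : RatFunc F)) = RatFunc.C (RatFunc.X : RatFunc F) + 1)
    (hσyz : σy RatFunc.X = RatFunc.X)
    (hσzF : ∀ c : F, σz (RatFunc.C (RatFunc.C c)) = RatFunc.C (RatFunc.C c))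
    (hσzy : σz (RatFunc.C (RatFunc.X : RatFunc F)) = RatFunc.C (RatFunc.X : RatFunc F))
    (hσzz : σz RatFunc.X = RatFunc.X + 1)
    (hφF : ∀ c : F, φ (RatFunc.C (RatFunc.C c)) = RatFunc.C (RatFunc.C c))
    (hφy : φ (RatFunc.C (RatFunc.X : RatFunc F)) =
      (β : RatFunc (RatFunc F)) * RatFunc.C (RatFunc.X : RatFunc F))
    (hφz : φ RatFunc.X =
      (β : RatFunc (RatFunc F))⁻¹ * RatFunc.X -
        (α : RatFunc (RatFunc F)) * RatFunc.C (RatFunc.X : RatFunc F)) :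
    ∀ f : RatFunc (RatFunc F),
      (∃ g : RatFunc (RatFunc F), f = (σy ^ β * σz ^ (-α)) g - g) ↔
        (∃ h : RatFunc (RatFunc F), φ f = σy h - h) := by
  set τ : RatFunc (RatFunc F) ≃+* RatFunc (RatFunc F) := σy ^ β * σz ^ (-α) with hτ
  -- values of τ on generators
  have y := (RatFunc.C (RatFunc.X : RatFunc F))
  have hτF : ∀ c : F, τ (RatFunc.C (RatFunc.C c)) = RatFunc.C (RatFunc.C c) := by
    intro c
    show (σy ^ β) ((σz ^ (-α)) _) = _
    rw [zpow_fixed σz _ (hσzF c), zpow_fixed σy _ (hσyF c)]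
  have hτy : τ (RatFunc.C (RatFunc.X : RatFunc F)) =
      RatFunc.C (RatFunc.X : RatFunc F) + (β : RatFunc (RatFunc F)) := by
    show (σy ^ β) ((σz ^ (-α)) _) = _
    rw [zpow_fixed σz _ hσzy, zpow_shift σy _ hσyy]
  have hτz : τ RatFunc.X = RatFunc.X - (α : RatFunc (RatFunc F)) := by
    show (σy ^ β) ((σz ^ (-α)) _) = _
    rw [zpow_shift σz _ hσzz, map_add, zpow_fixed σy _ hσyz, map_intCast]
    push_cast; ring
  -- conjugation identity φ ∘ τ = σy ∘ φ
  have key : ∀ x, φ (τ x) = σy (φ x) := by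
    have hhom : (φ.toRingHom.comp τ.toRingHom) = (σy.toRingHom.comp φ.toRingHom) := by
      apply ratfunc_hom_ext
      · intro r
        have hCcomp : ((φ.toRingHom.comp τ.toRingHom).comp RatFunc.C)
            = ((σy.toRingHom.comp φ.toRingHom).comp RatFunc.C) := by
          apply ratfunc_hom_ext
          · intro c
            simp only [RingHom.comp_apply, RingEquiv.toRingHom_eq_coe, RingHom.coe_coe]
            rw [hτF c, hφF c, hσyF c]
          · simp only [RingHom.comp_apply, RingEquiv.toRingHom_eq_coe, RingHom.coe_coe]
            rw [hτy, map_add, hφy, map_intCast, map_mul, map_intCast, hσyy]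
            ring
        exact congrFun (congrArg (fun h => h.toFun) hCcomp) r
      · simp only [RingHom.comp_apply, RingEquiv.toRingHom_eq_coe, RingHom.coe_coe]
        rw [hτz, map_sub, hφz, map_intCast, map_sub, map_mul, map_mul, map_inv₀,
          map_intCast, map_intCast, hσyz, hσyy]
        ring
    intro x
    exact congrFun (congrArg (fun h => h.toFun) hhom) x
  intro f
  constructor
  · rintro ⟨g, rfl⟩
    exact ⟨φ g, by rw [map_sub, key]⟩
  · rintro ⟨h, hh⟩
    refine ⟨φ.symm h, φ.injective ?_⟩
    rw [hh, map_sub, key, φ.apply_symm_apply]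
end

section
/- Every polynomial p ∈ F[y,z] is τ-summable for τ = σ_y^β σ_z^{−α} with β ≠ 0, i.e., there exists g ∈ F(y,z) with p = τ(g) − g. -/
open Polynomial

/-- If a field automorphism fixes `x`, so do all its integer powers. -/
lemma zpowFix {K : Type*} [Field K] (e : K ≃+* K) (x : K) (h : e x = x) :
    ∀ n : ℤ, (e ^ n) x = x := by
  have hinv : e.symm x = x := by
    have := congrArg e.symm h
    rw [e.symm_apply_apply] at this; exact this.symm
  intro n
  induction n using Int.induction_on with
  | zero => rfl
  | succ k ih => rw [zpow_add_one]; show (e ^ (k:ℤ)) (e x) = x; rw [h, ih]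
  | pred k ih =>
      rw [show (-(k:ℤ) - 1) = (-(k:ℤ)) - 1 by ring, zpow_sub_one]
      show (e ^ (-(k:ℤ))) (e.symm x) = x
      rw [hinv, ih]

/-- If a field automorphism shifts `x` by `1`, its `n`-th power shifts `x` by `n`. -/
lemma zpowShift {K : Type*} [Field K] (e : K ≃+* K) (x : K) (h : e x = x + 1) :
    ∀ n : ℤ, (e ^ n) x = x + n := by
  have hinv : e.symm x = x - 1 := by
    have := congrArg e.symm h
    rw [e.symm_apply_apply, map_add, map_one] at this
    rw [eq_sub_iff_add_eq]; exact this.symm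
  intro n
  induction n using Int.induction_on with
  | zero => show x = x + ((0:ℤ):K); simp
  | succ k ih =>
      rw [zpow_add_one]
      show (e ^ (k:ℤ)) (e x) = _
      rw [h, map_add, map_one, ih]
      push_cast; ring
  | pred k ih =>
      rw [show (-(k:ℤ) - 1) = (-(k:ℤ)) - 1 by ring, zpow_sub_one]
      show (e ^ (-(k:ℤ))) (e.symm x) = _
      rw [hinv, map_sub, map_one, ih]
      push_cast; ring

/-- Discrete antiderivative for a nonzero shift: every univariate polynomial over a
field of characteristic zero is a difference `s(X + b) - s(X)`. -/
lemma uniSummable {F : Type*} [Field F] [CharZero F] (b : F) (hb : b ≠ 0) :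
    ∀ (r : F[X]), ∃ s : F[X], s.comp (X + C b) - s = r := by
  suffices h : ∀ n : ℕ, ∀ r : F[X], r.natDegree ≤ n → ∃ s : F[X], s.comp (X + C b) - s = r by
    intro r; exact h r.natDegree r le_rfl
  intro n
  induction n with
  | zero =>
      intro r hr
      refine ⟨C (r.coeff 0 / b) * X, ?_⟩
      conv_rhs => rw [Polynomial.eq_C_of_natDegree_le_zero hr]
      rw [mul_comp, C_comp, X_comp, mul_add, ← C_mul, div_mul_cancel₀ _ hb]
      ring
  | succ n ih =>
      intro r hr
      set m := n + 2 with hm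
      set c' : F := r.coeff (n + 1) / ((m : F) * b) with hc'
      set s₀ : F[X] := C c' * X ^ m with hs₀
      have hmb : (m : F) * b ≠ 0 := mul_ne_zero (Nat.cast_ne_zero.mpr (by omega)) hb
      have hd : ∀ k : ℕ, (s₀.comp (X + C b) - s₀).coeff k
          = c' * (b ^ (m - k) * (m.choose k : F)) - c' * (X ^ m : F[X]).coeff k := by
        intro k
        rw [coeff_sub, mul_comp, C_comp, X_pow_comp, coeff_C_mul, coeff_C_mul,
          coeff_X_add_C_pow]
      set d₀ : F[X] := s₀.comp (X + C b) - s₀ with hd₀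
      have hcoeff : d₀.coeff (n + 1) = r.coeff (n + 1) := by
        rw [hd]
        rw [coeff_X_pow]
        simp only [show ¬ (n + 1 = m) by omega, if_false]
        rw [show m - (n+1) = 1 by omega, show m.choose (n+1) = m by
          rw [hm]; rw [show n + 2 = (n+1) + 1 from rfl, Nat.choose_succ_self_right]]
        rw [pow_one, mul_zero, sub_zero, hc', div_mul_eq_mul_div, mul_comm b (m:F),
          mul_div_assoc, div_self hmb, mul_one]
      have hhigh : ∀ k, n + 1 < k → d₀.coeff k = 0 := by
        intro k hk
        rw [hd, coeff_X_pow]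
        by_cases hkm : k = m
        · subst hkm; simp [Nat.sub_self]
        · rw [if_neg hkm, Nat.choose_eq_zero_of_lt (by omega)]
          simp
      have hr' : (r - d₀).natDegree ≤ n := by
        rw [natDegree_le_iff_coeff_eq_zero]
        intro N hN
        rw [coeff_sub]
        rcases eq_or_lt_of_le (Nat.succ_le_of_lt hN) with h1 | h1
        · rw [← h1, hcoeff, sub_self]
        · rw [hhigh N (by omega), coeff_eq_zero_of_natDegree_lt (by omega), sub_zero]
      obtain ⟨s₁, hs₁⟩ := ih (r - d₀) hr'
      refine ⟨s₀ + s₁, ?_⟩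
      rw [add_comp]
      have : s₀.comp (X + C b) + s₁.comp (X + C b) - (s₀ + s₁)
          = d₀ + (s₁.comp (X + C b) - s₁) := by rw [hd₀]; ring
      rw [this, hs₁]
      ring

/-- Bivariate discrete antiderivative: every `p ∈ F[y,z]` is `Φ q - q` where `Φ` is the
substitution `y ↦ y + b`, `z ↦ z - a` (with `b ≠ 0`). -/
lemma biSummable {F : Type*} [Field F] [CharZero F] (b a : F) (hb : b ≠ 0) :
    ∀ (p : Polynomial (Polynomial F)), ∃ q : Polynomial (Polynomial F),
      (Polynomial.eval₂RingHom (Polynomial.C.comp (Polynomial.eval₂RingHom Polynomial.C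
        (Polynomial.X + Polynomial.C b))) (Polynomial.X - Polynomial.C (Polynomial.C a))) q - q
        = p := by
  set shβ : F[X] →+* F[X] :=
    Polynomial.eval₂RingHom Polynomial.C (Polynomial.X + Polynomial.C b) with hshβ
  set Φ : Polynomial F[X] →+* Polynomial F[X] :=
    Polynomial.eval₂RingHom (Polynomial.C.comp shβ)
      (Polynomial.X - Polynomial.C (Polynomial.C a)) with hΦ
  have hshβ_apply : ∀ s : F[X], shβ s = s.comp (X + C b) := fun s => rfl
  have hΦC : ∀ s : F[X], Φ (C s) = C (shβ s) := by
    intro s; simp [hΦ, eval₂_C]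
  have hΦX : Φ X = X - C (C a) := by simp [hΦ]
  suffices h : ∀ n : ℕ, ∀ p : Polynomial F[X], p.natDegree ≤ n → ∃ q, Φ q - q = p by
    intro p; exact h p.natDegree p le_rfl
  intro n
  induction n with
  | zero =>
      intro p hp
      obtain ⟨s, hs⟩ := uniSummable b hb (p.coeff 0)
      refine ⟨C s, ?_⟩
      rw [hΦC, ← C_sub, hshβ_apply, hs]
      exact (Polynomial.eq_C_of_natDegree_le_zero hp).symm
  | succ n ih =>
      intro p hp
      obtain ⟨s, hs⟩ := uniSummable b hb (p.coeff (n + 1))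
      set q₀ : Polynomial F[X] := C s * X ^ (n + 1) with hq₀
      have hΦq₀ : Φ q₀ = C (shβ s) * (X - C (C a)) ^ (n + 1) := by
        rw [hq₀, map_mul, map_pow, hΦC, hΦX]
      set d₀ : Polynomial F[X] := Φ q₀ - q₀ with hd₀
      have hmonic : ((X - C (C a) : Polynomial F[X]) ^ (n + 1)).Monic :=
        (monic_X_sub_C _).pow _
      have hndeg : ((X - C (C a) : Polynomial F[X]) ^ (n + 1)).natDegree = n + 1 := by
        rw [(monic_X_sub_C (C a)).natDegree_pow, natDegree_X_sub_C, mul_one]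
      have hlead : ((X - C (C a) : Polynomial F[X]) ^ (n + 1)).coeff (n + 1) = 1 := by
        have := hmonic.coeff_natDegree
        rwa [hndeg] at this
      have hcoeff : d₀.coeff (n + 1) = p.coeff (n + 1) := by
        rw [hd₀, coeff_sub, hΦq₀, hq₀, coeff_C_mul, coeff_C_mul, coeff_X_pow, if_pos rfl,
          hlead, mul_one, mul_one, hshβ_apply, hs]
      have hhigh : ∀ k, n + 1 < k → d₀.coeff k = 0 := by
        intro k hk
        have h1 : ((X - C (C a) : Polynomial F[X]) ^ (n + 1)).coeff k = 0 :=
          coeff_eq_zero_of_natDegree_lt (by rw [hndeg]; omega)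
        rw [hd₀, coeff_sub, hΦq₀, hq₀, coeff_C_mul, coeff_C_mul, coeff_X_pow,
          if_neg (by omega), h1]
        simp
      have hp' : (p - d₀).natDegree ≤ n := by
        rw [natDegree_le_iff_coeff_eq_zero]
        intro N hN
        rw [coeff_sub]
        rcases eq_or_lt_of_le (Nat.succ_le_of_lt hN) with h1 | h1
        · rw [← h1, hcoeff, sub_self]
        · rw [hhigh N (by omega), coeff_eq_zero_of_natDegree_lt (by omega), sub_zero]
      obtain ⟨q₁, hq₁⟩ := ih (p - d₀) hp'
      refine ⟨q₀ + q₁, ?_⟩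
      rw [map_add]
      have : Φ q₀ + Φ q₁ - (q₀ + q₁) = d₀ + (Φ q₁ - q₁) := by rw [hd₀]; ring
      rw [this, hq₁]
      ring

/-- The embedding of `F[y,z]` (modeled as `Polynomial (Polynomial F)`, inner variable
`y`, outer variable `z`) into `F(y,z)` (modeled as `RatFunc (RatFunc F)` with
`y = RatFunc.C RatFunc.X` and `z = RatFunc.X`). -/
noncomputable def polyEmb (F : Type*) [Field F] :
    Polynomial (Polynomial F) →+* RatFunc (RatFunc F) :=
  Polynomial.eval₂RingHom
    (Polynomial.eval₂RingHom ((RatFunc.C).comp (RatFunc.C : F →+* RatFunc F))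
      (RatFunc.C (RatFunc.X : RatFunc F)))
    (RatFunc.X : RatFunc (RatFunc F))

/-- Every polynomial `p ∈ F[y,z]` is `τ`-summable for `τ = σ_y^β σ_z^{-α}` with
`β ≠ 0`: there exists `g ∈ F(y,z)` with `p = τ(g) - g`. The shift automorphisms
`σ_y, σ_z` of `F(y,z) = RatFunc (RatFunc F)` are characterized by their values on
`F`, `y` and `z`. -/
theorem polynomial_is_tau_summable {F : Type*} [Field F] [CharZero F]
    (α β : ℤ) (hβ : β ≠ 0)
    (σy σz : RatFunc (RatFunc F) ≃+* RatFunc (RatFunc F))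
    (hσyF : ∀ c : F, σy (RatFunc.C (RatFunc.C c)) = RatFunc.C (RatFunc.C c))
    (hσyy : σy (RatFunc.C (RatFunc.X : RatFunc F)) = RatFunc.C (RatFunc.X : RatFunc F) + 1)
    (hσyz : σy RatFunc.X = RatFunc.X)
    (hσzF : ∀ c : F, σz (RatFunc.C (RatFunc.C c)) = RatFunc.C (RatFunc.C c))
    (hσzy : σz (RatFunc.C (RatFunc.X : RatFunc F)) = RatFunc.C (RatFunc.X : RatFunc F))
    (hσzz : σz RatFunc.X = RatFunc.X + 1)
    (p : Polynomial (Polynomial F)) :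
    ∃ g : RatFunc (RatFunc F), polyEmb F p = (σy ^ β * σz ^ (-α)) g - g := by
  classical
  set K := RatFunc (RatFunc F)
  set τ : K ≃+* K := σy ^ β * σz ^ (-α) with hτ
  have hmulapp : ∀ x : K, τ x = (σy ^ β) ((σz ^ (-α)) x) := fun _ => rfl
  -- values of τ on generators
  have hτF : ∀ c : F, τ (RatFunc.C (RatFunc.C c)) = RatFunc.C (RatFunc.C c) := by
    intro c
    rw [hmulapp, zpowFix σz _ (hσzF c), zpowFix σy _ (hσyF c)]
  have hτy : τ (RatFunc.C (RatFunc.X : RatFunc F))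
      = RatFunc.C (RatFunc.X : RatFunc F) + (β : K) := by
    rw [hmulapp, zpowFix σz _ hσzy, zpowShift σy _ hσyy]
  have hτz : τ (RatFunc.X : K) = RatFunc.X + ((-α : ℤ) : K) := by
    rw [hmulapp, zpowShift σz _ hσzz]
    rw [map_add, zpowFix σy _ hσyz, map_intCast]
  -- the polynomial-level substitution Φ : y ↦ y + β, z ↦ z - α
  set Φ : Polynomial (Polynomial F) →+* Polynomial (Polynomial F) :=
    Polynomial.eval₂RingHom (Polynomial.C.comp (Polynomial.eval₂RingHom Polynomial.C
      (Polynomial.X + Polynomial.C ((β : ℤ) : F))))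
      (Polynomial.X - Polynomial.C (Polynomial.C ((α : ℤ) : F))) with hΦ
  -- compatibility: polyEmb ∘ Φ = τ ∘ polyEmb
  have hcomm : (polyEmb F).comp Φ = (τ : K →+* K).comp (polyEmb F) := by
    apply Polynomial.ringHom_ext
    · intro a
      have : ((polyEmb F).comp Φ).comp (Polynomial.C : Polynomial F →+* _)
          = ((τ : K →+* K).comp (polyEmb F)).comp (Polynomial.C : Polynomial F →+* _) := by
        apply Polynomial.ringHom_ext
        · intro c
          simp only [RingHom.comp_apply]
          show polyEmb F (Φ (Polynomial.C (Polynomial.C c)))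
            = τ (polyEmb F (Polynomial.C (Polynomial.C c)))
          have h1 : Φ (Polynomial.C (Polynomial.C c)) = Polynomial.C (Polynomial.C c) := by
            simp [hΦ, Polynomial.eval₂_C]
          have h2 : polyEmb F (Polynomial.C (Polynomial.C c)) = RatFunc.C (RatFunc.C c) := by
            simp [polyEmb, Polynomial.eval₂_C]
          rw [h1, h2, hτF]
        · simp only [RingHom.comp_apply]
          show polyEmb F (Φ (Polynomial.C Polynomial.X))
            = τ (polyEmb F (Polynomial.C Polynomial.X))
          have h1 : Φ (Polynomial.C Polynomial.X)
              = Polynomial.C (Polynomial.X + Polynomial.C ((β : ℤ) : F)) := by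
            simp [hΦ, Polynomial.eval₂_C, Polynomial.eval₂_X]
          have h2 : polyEmb F (Polynomial.C Polynomial.X)
              = RatFunc.C (RatFunc.X : RatFunc F) := by
            simp [polyEmb, Polynomial.eval₂_C, Polynomial.eval₂_X]
          have h3 : polyEmb F (Polynomial.C (Polynomial.X + Polynomial.C ((β : ℤ) : F)))
              = RatFunc.C (RatFunc.X : RatFunc F) + (β : K) := by
            rw [map_intCast (Polynomial.C : F →+* Polynomial F) β, map_add,
              map_intCast (Polynomial.C : Polynomial F →+* Polynomial (Polynomial F)) β,
              map_add, h2, map_intCast]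
          rw [h1, h3, h2, hτy]
      exact RingHom.congr_fun this a
    · simp only [RingHom.comp_apply]
      show polyEmb F (Φ Polynomial.X) = τ (polyEmb F Polynomial.X)
      have h1 : Φ Polynomial.X
          = Polynomial.X - Polynomial.C (Polynomial.C ((α : ℤ) : F)) := by
        simp [hΦ, Polynomial.eval₂_X]
      have h2 : polyEmb F Polynomial.X = (RatFunc.X : K) := by
        simp [polyEmb, Polynomial.eval₂_X]
      have h3 : polyEmb F (Polynomial.X - Polynomial.C (Polynomial.C ((α : ℤ) : F)))
          = RatFunc.X + ((-α : ℤ) : K) := by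
        rw [map_sub, h2]
        have h4 : polyEmb F (Polynomial.C (Polynomial.C ((α : ℤ) : F)))
            = ((α : ℤ) : K) := by
          simp [polyEmb, Polynomial.eval₂_C, map_intCast]
        rw [h4]
        push_cast
        ring
      rw [h1, h3, h2, hτz]
  -- solve at the polynomial level
  have hbne : ((β : ℤ) : F) ≠ 0 := by
    exact_mod_cast (Int.cast_injective.ne_iff.mpr hβ : ((β : ℤ) : F) ≠ ((0 : ℤ) : F))
  obtain ⟨q, hq⟩ := biSummable ((β : ℤ) : F) ((α : ℤ) : F) hbne p
  refine ⟨polyEmb F q, ?_⟩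
  have h5 : polyEmb F (Φ q) = τ (polyEmb F q) := RingHom.congr_fun hcomm q
  calc polyEmb F p = polyEmb F (Φ q - q) := by rw [hq]
    _ = polyEmb F (Φ q) - polyEmb F q := by rw [map_sub]
    _ = τ (polyEmb F q) - polyEmb F q := by rw [h5]
end

section
/- For integers β > 0 and α, if f ∈ F(y,z) is σ_y^β σ_z^{−α}-summable, then f is (σ_y,σ_z)-summable. -/
/-! `τ^n a - a` telescopes to `τ h - h` for every `n ∈ ℤ`, and
`(σ_y^β σ_z^{-α}) g - g = (σ_y^β b - b) + (σ_z^{-α} g - g)` with `b = σ_z^{-α} g`. -/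

namespace RingAut

variable {R : Type*} [NonUnitalNonAssocRing R]

theorem exists_zpow_apply_sub_self_eq (τ : RingAut R) (n : ℤ) (a : R) :
    ∃ h : R, (τ ^ n) a - a = τ h - h := by
  induction n using Int.induction_on with
  | zero => exact ⟨0, by simp⟩
  | succ k ih =>
    obtain ⟨h, hh⟩ := ih
    refine ⟨(τ ^ (k : ℤ)) a + h, ?_⟩
    have hsucc : (τ ^ ((k : ℤ) + 1)) a = τ ((τ ^ (k : ℤ)) a) := by
      rw [add_comm, zpow_one_add, mul_apply]
    rw [hsucc, map_add, add_sub_add_comm, ← hh]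
    abel
  | pred k ih =>
    obtain ⟨h, hh⟩ := ih
    refine ⟨h - (τ ^ (-(k : ℤ) - 1)) a, ?_⟩
    have hpred : (τ ^ (-(k : ℤ))) a = τ ((τ ^ (-(k : ℤ) - 1)) a) := by
      rw [← mul_apply, ← zpow_one_add, add_sub_cancel]
    rw [hpred] at hh
    rw [map_sub, sub_sub_sub_comm, ← hh]
    abel

end RingAut

theorem tau_summable_imp_bivariate_summable_general {K : Type*} [Field K] (σy σz : K ≃+* K)
    (α β : ℤ) (f : K)
    (hf : ∃ g : K, f = (σy ^ β * σz ^ (-α)) g - g) :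
    ∃ g h : K, f = (σy g - g) + (σz h - h) := by
  obtain ⟨g, rfl⟩ := hf
  obtain ⟨u, hu⟩ := RingAut.exists_zpow_apply_sub_self_eq σy β ((σz ^ (-α)) g)
  obtain ⟨v, hv⟩ := RingAut.exists_zpow_apply_sub_self_eq σz (-α) g
  refine ⟨u, v, ?_⟩
  rw [RingAut.mul_apply, ← hu, ← hv]
  abel

/-- For integers `β > 0` and `α`, if `f ∈ F(y,z)` is `σ_y^β σ_z^{-α}`-summable,
then `f` is `(σ_y,σ_z)`-summable. -/
theorem tau_summable_imp_bivariate_summable {K : Type*} [Field K] (σy σz : K ≃+* K)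
    (hcomm : ∀ f : K, σy (σz f) = σz (σy f)) (α β : ℤ) (hβ : 0 < β) (f : K)
    (hf : ∃ g : K, f = (σy ^ β * σz ^ (-α)) g - g) :
    ∃ g h : K, f = (σy g - g) + (σz h - h) :=
  tau_summable_imp_bivariate_summable_general σy σz α β f hf
end

section
/- Suppose f ∈ F(y,z) admits two decompositions f = σ_y(g) − g + a/b = σ_y(g') − g' + a'/b' where g, g' ∈ F(y,z), a, a', b, b' ∈ F[y,z], deg_y(a) < deg_y(b), b is σ_y-free, gcd(a,b) = 1, and deg_y(a') < deg_y(b') with b' σ_y-free. Then deg_y(b') ≥ deg_y(b) (minimality of the denominator in Abramov's reduction). -/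
open Polynomial UniqueFactorizationMonoid

namespace AbramovProof
variable {E : Type*} [Field E]




/-- shift of a polynomial by `c` : `p(X) ↦ p(X + c)`. -/
noncomputable def T (c : E) (p : Polynomial E) : Polynomial E := p.comp (X + C c)

lemma T_eq_aeval (c : E) (p : Polynomial E) : T c p = algEquivAevalXAddC c p := by
  simp [T, algEquivAevalXAddC_apply, comp_eq_aeval]

lemma T_T (c d : E) (p : Polynomial E) : T c (T d p) = T (c + d) p := by
  simp only [T, comp_assoc]
  congr 1
  rw [add_comp, X_comp, C_comp, C_add, add_assoc]

@[simp] lemma T_zero (p : Polynomial E) : T 0 p = p := by simp [T]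

lemma multiplicity_T (c : E) (p u : Polynomial E) :
    multiplicity (T c p) (T c u) = multiplicity p u := by
  rw [T_eq_aeval, T_eq_aeval]
  exact multiplicity_map_eq (algEquivAevalXAddC c)

lemma T_dvd_iff (c : E) (p u : Polynomial E) : T c p ∣ T c u ↔ p ∣ u := by
  rw [T_eq_aeval, T_eq_aeval]
  exact map_dvd_iff (algEquivAevalXAddC c)

lemma T_ne_zero (c : E) {p : Polynomial E} (hp : p ≠ 0) : T c p ≠ 0 :=
  comp_X_add_C_ne_zero_iff.mpr hp

lemma T_irreducible (c : E) {p : Polynomial E} (hp : Irreducible p) :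
    Irreducible (T c p) := by
  rw [T_eq_aeval]
  exact (MulEquiv.irreducible_iff (MulEquivClass.toMulEquiv
    (algEquivAevalXAddC c).toRingEquiv)).mpr hp

lemma T_prime (c : E) {p : Polynomial E} (hp : Irreducible p) : Prime (T c p) :=
  (T_irreducible c hp).prime

lemma T_monic (c : E) {p : Polynomial E} (hp : p.Monic) : (T c p).Monic :=
  hp.comp_X_add_C c

lemma T_natDegree (c : E) (p : Polynomial E) : (T c p).natDegree = p.natDegree := by
  simp [T, natDegree_comp]



lemma T_inj_aux [CharZero E] {p : Polynomial E} (hp : 0 < p.natDegree) {c : E}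
    (h : p.comp (X + C c) = p) : c = 0 := by
  by_contra hc
  set L := AlgebraicClosure E
  have hι : Function.Injective (algebraMap E L) := (algebraMap E L).injective
  haveI : CharZero L := charZero_of_injective_algebraMap hι
  set q : Polynomial L := p.map (algebraMap E L) with hq
  have hp0 : p ≠ 0 := fun h0 => by simp [h0] at hp
  have hq0 : q ≠ 0 := (Polynomial.map_ne_zero_iff hι).mpr hp0
  set d : L := algebraMap E L c with hd
  have hd0 : d ≠ 0 := by
    intro h0
    exact hc (hι (by rw [← hd, h0, map_zero]))
  have hcomp : q.comp (X + C d) = q := by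
    have := congrArg (Polynomial.map (algebraMap E L)) h
    rwa [map_comp, Polynomial.map_add, map_X, map_C] at this
  have hdeg : q.degree ≠ 0 := by
    have : 0 < q.natDegree := by rwa [hq, natDegree_map_eq_of_injective hι]
    intro h0
    have h2 : q.natDegree = 0 := natDegree_eq_zero_iff_degree_le_zero.mpr (le_of_eq h0)
    omega
  obtain ⟨α, hα⟩ := IsAlgClosed.exists_root q hdeg
  have hshift : ∀ x : L, q.eval x = q.eval (x + d) := by
    intro x
    conv_lhs => rw [← hcomp]
    simp [eval_comp]
  have hroot : ∀ n : ℕ, q.IsRoot (α + n * d) := by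
    intro n
    induction n with
    | zero => simpa using hα
    | succ k ih =>
      have h2 := (hshift (α + k * d)).symm.trans ih
      show eval _ q = 0
      push_cast
      rw [show α + ((k:L)+1) * d = α + (k:L) * d + d by ring]
      exact h2
  have hinj : Function.Injective (fun n : ℕ => α + n * d) := by
    intro m n hmn
    simp only [add_right_inj] at hmn
    have := mul_right_cancel₀ hd0 hmn
    exact_mod_cast this
  exact (Set.infinite_of_injective_forall_mem hinj hroot)
    (Polynomial.finite_setOf_isRoot hq0)


/-- The order of vanishing of a rational function at the prime `p`. -/
noncomputable def ord (p : Polynomial E) (r : RatFunc E) : ℤ :=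
  (multiplicity p r.num : ℤ) - multiplicity p r.denom

lemma ord_eq {p : Polynomial E} (hp : Prime p) {u v : Polynomial E} (hu : u ≠ 0) (hv : v ≠ 0)
    {r : RatFunc E}
    (h : r = algebraMap (Polynomial E) (RatFunc E) u / algebraMap (Polynomial E) (RatFunc E) v) :
    ord p r = (multiplicity p u : ℤ) - multiplicity p v := by
  have hr0 : r ≠ 0 := by
    rw [h]
    exact div_ne_zero (RatFunc.algebraMap_ne_zero hu) (RatFunc.algebraMap_ne_zero hv)
  have hnum : r.num ≠ 0 := RatFunc.num_ne_zero hr0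
  have hden : r.denom ≠ 0 := RatFunc.denom_ne_zero r
  have key2 : algebraMap (Polynomial E) (RatFunc E) r.num /
      algebraMap (Polynomial E) (RatFunc E) r.denom =
      algebraMap (Polynomial E) (RatFunc E) u / algebraMap (Polynomial E) (RatFunc E) v := by
    rw [RatFunc.num_div_denom]; exact h
  rw [div_eq_div_iff (RatFunc.algebraMap_ne_zero hden) (RatFunc.algebraMap_ne_zero hv)] at key2
  have key : r.num * v = u * r.denom := by
    apply RatFunc.algebraMap_injective E
    rw [map_mul, map_mul]
    exact key2
  have h1 := multiplicity_mul hp (FiniteMultiplicity.of_prime_left hp (mul_ne_zero hnum hv))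
  have h2 := multiplicity_mul hp (FiniteMultiplicity.of_prime_left hp (mul_ne_zero hu hden))
  rw [key, h2] at h1
  unfold ord
  omega

lemma ord_def (p : Polynomial E) (r : RatFunc E) :
    ord p r = (multiplicity p r.num : ℤ) - multiplicity p r.denom := rfl

lemma le_ord_add {p : Polynomial E} (hp : Prime p) {r s : RatFunc E} (hr : r ≠ 0) (hs : s ≠ 0)
    (hrs : r + s ≠ 0) : min (ord p r) (ord p s) ≤ ord p (r + s) := by
  have hnr : r.num ≠ 0 := RatFunc.num_ne_zero hr
  have hns : s.num ≠ 0 := RatFunc.num_ne_zero hs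
  have hdr : r.denom ≠ 0 := RatFunc.denom_ne_zero r
  have hds : s.denom ≠ 0 := RatFunc.denom_ne_zero s
  set w : Polynomial E := r.num * s.denom + r.denom * s.num with hw
  have hrep : r + s = algebraMap (Polynomial E) (RatFunc E) w /
      algebraMap (Polynomial E) (RatFunc E) (r.denom * s.denom) := by
    conv_lhs => rw [← RatFunc.num_div_denom r, ← RatFunc.num_div_denom s]
    rw [div_add_div _ _ (RatFunc.algebraMap_ne_zero hdr) (RatFunc.algebraMap_ne_zero hds),
      ← map_mul, ← map_mul, ← map_add, ← map_mul]
  have hw0 : w ≠ 0 := by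
    intro h0
    rw [h0, map_zero, zero_div] at hrep
    exact hrs hrep
  rw [ord_eq hp hw0 (mul_ne_zero hdr hds) hrep]
  have hmul := multiplicity_mul hp (FiniteMultiplicity.of_prime_left hp (mul_ne_zero hdr hds))
  rw [hmul]
  -- lower bound on multiplicity of w
  have hb1 : p ^ (multiplicity p r.num + multiplicity p s.denom) ∣ r.num * s.denom := by
    rw [pow_add]
    exact mul_dvd_mul (pow_multiplicity_dvd p r.num) (pow_multiplicity_dvd p s.denom)
  have hb2 : p ^ (multiplicity p r.denom + multiplicity p s.num) ∣ r.denom * s.num := by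
    rw [pow_add]
    exact mul_dvd_mul (pow_multiplicity_dvd p r.denom) (pow_multiplicity_dvd p s.num)
  set k : ℕ := min (multiplicity p r.num + multiplicity p s.denom)
    (multiplicity p r.denom + multiplicity p s.num) with hk
  have hkw : (k : ℤ) ≤ multiplicity p w := by
    have : p ^ k ∣ w :=
      dvd_add ((pow_dvd_pow p (min_le_left _ _)).trans hb1)
        ((pow_dvd_pow p (min_le_right _ _)).trans hb2)
    exact_mod_cast (FiniteMultiplicity.of_prime_left hp hw0).le_multiplicity_of_pow_dvd this
  rw [ord_def, ord_def]
  omega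

lemma ord_neg {p : Polynomial E} (hp : Prime p) {r : RatFunc E} (hr : r ≠ 0) :
    ord p (-r) = ord p r := by
  have h : -r = algebraMap (Polynomial E) (RatFunc E) (-r.num) /
      algebraMap (Polynomial E) (RatFunc E) r.denom := by
    rw [map_neg, neg_div, RatFunc.num_div_denom]
  rw [ord_eq hp (neg_ne_zero.mpr (RatFunc.num_ne_zero hr)) (RatFunc.denom_ne_zero r) h, ord_def]
  have : multiplicity p (-r.num) = multiplicity p r.num :=
    multiplicity_eq_of_associated_right (Associated.refl r.num).neg_left
  rw [this]

lemma le_ord_sub {p : Polynomial E} (hp : Prime p) {r s : RatFunc E} (hr : r ≠ 0) (hs : s ≠ 0)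
    (hrs : r - s ≠ 0) : min (ord p r) (ord p s) ≤ ord p (r - s) := by
  have := le_ord_add hp hr (neg_ne_zero.mpr hs) (by rwa [← sub_eq_add_neg])
  rwa [← sub_eq_add_neg, ord_neg hp hs] at this

lemma ord_sub_eq {p : Polynomial E} (hp : Prime p) {r s : RatFunc E} (hr : r ≠ 0) (hs : s ≠ 0)
    (hlt : ord p r < ord p s) : r - s ≠ 0 ∧ ord p (r - s) = ord p r := by
  have hne : r ≠ s := fun h => by rw [h] at hlt; omega
  have hrs : r - s ≠ 0 := sub_ne_zero.mpr hne
  refine ⟨hrs, ?_⟩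
  have h1 : min (ord p r) (ord p s) ≤ ord p (r - s) := le_ord_sub hp hr hs hrs
  have h2 : min (ord p (r - s)) (ord p s) ≤ ord p r := by
    have := le_ord_add hp hrs hs (by rw [sub_add_cancel]; exact hr)
    rwa [sub_add_cancel] at this
  omega

lemma ord_sigma (σ : RatFunc E ≃+* RatFunc E)
    (hσ : ∀ p : Polynomial E, σ (algebraMap (Polynomial E) (RatFunc E) p) =
      algebraMap (Polynomial E) (RatFunc E) (p.comp (X + 1)))
    {p : Polynomial E} (hp : Irreducible p) {h : RatFunc E} (hh : h ≠ 0) :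
    ord p (σ h) = ord (T (-1 : E) p) h := by
  have hnum : h.num ≠ 0 := RatFunc.num_ne_zero hh
  have hden : h.denom ≠ 0 := RatFunc.denom_ne_zero h
  have hX1 : ∀ u : Polynomial E, u.comp (X + 1) = T (1 : E) u := by
    intro u; rw [T]; norm_num
  have hrep : σ h = algebraMap (Polynomial E) (RatFunc E) (T (1:E) h.num) /
      algebraMap (Polynomial E) (RatFunc E) (T (1:E) h.denom) := by
    conv_lhs => rw [← RatFunc.num_div_denom h]
    rw [map_div₀, hσ, hσ, hX1, hX1]
  rw [ord_eq hp.prime (T_ne_zero _ hnum) (T_ne_zero _ hden) hrep]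
  have hpeq : T (1:E) (T (-1:E) p) = p := by rw [T_T]; norm_num
  rw [← hpeq, multiplicity_T, multiplicity_T, hpeq, ord_def]

lemma shift_dvd_absurd [CharZero E] {b p : Polynomial E}
    (hbfree : ∀ l : ℤ, l ≠ 0 → IsCoprime b (b.comp (X + C (l : E))))
    (hirr : Irreducible p) (hpb : p ∣ b) {s : ℤ} (hdvd : T ((s : ℤ) : E) p ∣ b) (hs : s ≠ 0) :
    False := by
  have h1 : T (((-s : ℤ) : E)) (T ((s:ℤ):E) p) ∣ T (((-s:ℤ)):E) b := (T_dvd_iff _ _ _).mpr hdvd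
  rw [T_T] at h1
  have hc : ((-s:ℤ):E) + ((s:ℤ):E) = 0 := by push_cast; ring
  rw [hc, T_zero] at h1
  have h2 := hbfree (-s) (neg_ne_zero.mpr hs)
  exact hirr.not_isUnit (h2.isUnit_of_dvd' hpb h1)

lemma T_int_inj [CharZero E] {p : Polynomial E} (hirr : Irreducible p) {s t : ℤ}
    (hst : T ((s:ℤ):E) p = T ((t:ℤ):E) p) : s = t := by
  have h1 : T ((-(t:ℤ)):E) (T ((s:ℤ):E) p) = T ((-(t:ℤ)):E) (T ((t:ℤ):E) p) := by rw [hst]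
  rw [T_T, T_T] at h1
  have hc : ((-(t:ℤ)):E) + ((t:ℤ):E) = 0 := by push_cast; ring
  rw [hc, T_zero] at h1
  have hdeg : 0 < p.natDegree :=
    natDegree_pos_iff_degree_pos.mpr (degree_pos_of_irreducible hirr)
  have := T_inj_aux hdeg h1
  have h3 : ((s:ℤ):E) = ((t:ℤ):E) := by linear_combination this
  exact_mod_cast h3

lemma key_lemma [CharZero E] (σ : RatFunc E ≃+* RatFunc E)
    (hσ : ∀ p : Polynomial E, σ (algebraMap (Polynomial E) (RatFunc E) p) =
      algebraMap (Polynomial E) (RatFunc E) (p.comp (X + 1)))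
    (h : RatFunc E) (a b a' b' : Polynomial E)
    (ha : a ≠ 0) (hb : b ≠ 0) (hb' : b' ≠ 0)
    (hr : σ h - h =
      algebraMap (Polynomial E) (RatFunc E) a / algebraMap (Polynomial E) (RatFunc E) b -
      algebraMap (Polynomial E) (RatFunc E) a' / algebraMap (Polynomial E) (RatFunc E) b')
    (hgcd : IsCoprime a b)
    (hbfree : ∀ l : ℤ, l ≠ 0 → IsCoprime b (b.comp (X + C (l : E))))
    {p : Polynomial E} (hmon : p.Monic) (hirr : Irreducible p) (hpb : p ∣ b) :
    ∃ s : ℤ, (T ((s : ℤ) : E) p) ^ (multiplicity p b) ∣ b' := by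
  classical
  set x : RatFunc E := algebraMap (Polynomial E) (RatFunc E) a /
    algebraMap (Polynomial E) (RatFunc E) b with hx
  set y : RatFunc E := algebraMap (Polynomial E) (RatFunc E) a' /
    algebraMap (Polynomial E) (RatFunc E) b' with hy
  set m : ℕ := multiplicity p b with hm
  have hm1 : 0 < m := multiplicity_pos_of_dvd hpb
  have hx0 : x ≠ 0 :=
    div_ne_zero (RatFunc.algebraMap_ne_zero ha) (RatFunc.algebraMap_ne_zero hb)
  set P : ℤ → Polynomial E := fun s => T ((s : ℤ) : E) p with hPdef
  have hP0 : P 0 = p := by simp [hPdef]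
  have hPirr : ∀ s, Irreducible (P s) := fun s => T_irreducible _ hirr
  have hPprime : ∀ s, Prime (P s) := fun s => (hPirr s).prime
  have hPmon : ∀ s, (P s).Monic := fun s => T_monic _ hmon
  -- the case x = y
  by_cases hr0 : x - y = 0
  · have hxy : x = y := sub_eq_zero.mp hr0
    have hcross : a * b' = a' * b := by
      rw [hx, hy, div_eq_div_iff (RatFunc.algebraMap_ne_zero hb)
        (RatFunc.algebraMap_ne_zero hb')] at hxy
      apply RatFunc.algebraMap_injective E
      rw [map_mul, map_mul]; exact hxy
    have hbb' : b ∣ b' := by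
      refine (hgcd.symm.dvd_of_dvd_mul_left ?_)
      exact ⟨a', by linear_combination hcross⟩
    refine ⟨0, ?_⟩
    have e : T (((0:ℤ)):E) p = p := by norm_num [T_zero]
    rw [e]
    exact dvd_trans (pow_multiplicity_dvd p b) hbb'
  -- main case
  have hh0 : h ≠ 0 := by
    intro h0
    rw [h0, map_zero, sub_zero] at hr
    exact hr0 (hr.symm.trans rfl) |>.elim
  have hσh0 : σ h ≠ 0 := fun h0 => hh0 (by simpa using (EmbeddingLike.map_eq_zero_iff).mp h0)
  have hσhh : σ h - h ≠ 0 := by rw [hr]; exact hr0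
  by_contra hcon
  push_neg at hcon
  -- multiplicities of shifted primes in b and a
  have hPb : ∀ s : ℤ, s ≠ 0 → multiplicity (P s) b = 0 := by
    intro s hs
    exact multiplicity_eq_zero.mpr (fun hdvd => shift_dvd_absurd hbfree hirr hpb hdvd hs)
  have hpa : multiplicity p a = 0 :=
    multiplicity_eq_zero.mpr (fun hdvd => hirr.not_isUnit (hgcd.isUnit_of_dvd' hdvd hpb))
  have hordx : ∀ s : ℤ, ord (P s) x =
      (multiplicity (P s) a : ℤ) - multiplicity (P s) b := fun s =>
    ord_eq (hPprime s) ha hb hx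
  have hordx0 : ord (P 0) x = -(m : ℤ) := by
    rw [hordx 0, hP0, hpa, hm]; simp
  have hordxs : ∀ s : ℤ, s ≠ 0 → 0 ≤ ord (P s) x := by
    intro s hs
    rw [hordx s, hPb s hs]
    simp
  -- Claim A
  have claimA : ord (P 0) (x - y) = -(m:ℤ) ∧ ∀ s : ℤ, s ≠ 0 → -(m:ℤ) < ord (P s) (x - y) := by
    by_cases ha' : a' = 0
    · have hy0 : y = 0 := by rw [hy, ha', map_zero, zero_div]
      rw [hy0, sub_zero]
      exact ⟨hordx0, fun s hs => lt_of_lt_of_le (by omega) (hordxs s hs)⟩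
    · have hy0 : y ≠ 0 :=
        div_ne_zero (RatFunc.algebraMap_ne_zero ha') (RatFunc.algebraMap_ne_zero hb')
      have hordy : ∀ s : ℤ, -(m:ℤ) < ord (P s) y := by
        intro s
        rw [ord_eq (hPprime s) ha' hb' hy]
        have hlt : multiplicity (P s) b' < m :=
          ((FiniteMultiplicity.of_prime_left (hPprime s) hb').multiplicity_lt_iff_not_dvd).mpr
            (hcon s)
        omega
      constructor
      · have := ord_sub_eq (hPprime 0) hx0 hy0 (lt_of_le_of_lt (le_of_eq hordx0) (hordy 0))
        rw [this.2, hordx0]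
      · intro s hs
        have := le_ord_sub (hPprime s) hx0 hy0 hr0
        have h1 := hordxs s hs
        have h2 := hordy s
        omega
  -- relation between consecutive orders
  have hords : ∀ s : ℤ, ord (P s) (σ h) = ord (P (s - 1)) h := by
    intro s
    rw [ord_sigma σ hσ (hPirr s) hh0]
    congr 1
    show T (-1 : E) (T ((s:ℤ):E) p) = T (((s-1:ℤ)):E) p
    rw [T_T]
    congr 1
    push_cast; ring
  have hrel : ∀ s : ℤ, min (ord (P (s-1)) h) (ord (P s) h) ≤ ord (P s) (x - y) := by
    intro s
    rw [← hr, ← hords s]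
    exact le_ord_sub (hPprime s) hσh0 hh0 hσhh
  have hrel2 : ∀ s : ℤ, ord (P (s-1)) h ≠ ord (P s) h →
      ord (P s) (x - y) = min (ord (P (s-1)) h) (ord (P s) h) := by
    intro s hne
    rcases lt_or_gt_of_ne hne with hlt | hgt
    · have := ord_sub_eq (hPprime s) hσh0 hh0 (by rw [hords s]; exact hlt)
      rw [← hr, this.2, hords s, min_eq_left hlt.le]
    · have hsub := ord_sub_eq (hPprime s) hh0 hσh0 (by rw [hords s]; exact hgt)
      have hneg : σ h - h = -(h - σ h) := by ring
      rw [← hr, hneg, ord_neg (hPprime s) hsub.1, hsub.2, min_eq_right hgt.le]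
  -- the set of shifts where h has a deep pole
  set N : Set ℤ := {s : ℤ | ord (P s) h ≤ -(m:ℤ)} with hN
  have hNne : N.Nonempty := by
    have h1 := hrel 0
    rw [claimA.1] at h1
    rcases min_le_iff.mp h1 with h2 | h2
    · exact ⟨0 - 1, h2⟩
    · exact ⟨0, h2⟩
  have hden0 : h.denom ≠ 0 := RatFunc.denom_ne_zero h
  have hPinj : Function.Injective P := fun s t hst => T_int_inj hirr hst
  have hNfin : N.Finite := by
    have hsub : N ⊆ P ⁻¹' ((normalizedFactors h.denom).toFinset : Set (Polynomial E)) := by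
      intro s hs
      simp only [Set.mem_preimage, Multiset.mem_toFinset]
      have hdvd : P s ∣ h.denom := by
        have h1 : (0:ℤ) < multiplicity (P s) h.denom := by
          have h2 : ord (P s) h ≤ -(m:ℤ) := hs
          rw [ord_def] at h2
          omega
        exact multiplicity_ne_zero.mp (by exact_mod_cast h1.ne')
      obtain ⟨q, hq, hassoc⟩ :=
        exists_mem_normalizedFactors_of_dvd hden0 (hPirr s) hdvd
      have hqmon : q.Monic := by
        have hq0 : q ≠ 0 := (prime_of_normalized_factor q hq).ne_zero
        have := monic_normalize hq0
        rwa [normalize_normalized_factor q hq] at this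
      rw [eq_of_monic_of_associated (hPmon s) hqmon hassoc]
      simp only [Finset.coe_sort_coe, Finset.mem_coe, Multiset.mem_toFinset]
      exact hq
    exact (Set.Finite.preimage hPinj.injOn
      ((normalizedFactors h.denom).toFinset.finite_toSet)).subset hsub
  -- extremal elements
  set F : Finset ℤ := hNfin.toFinset with hF
  have hFne : F.Nonempty := Set.Finite.toFinset_nonempty hNfin |>.mpr hNne
  set smax : ℤ := F.max' hFne with hsmax
  set smin : ℤ := F.min' hFne with hsmin
  have hmemN : ∀ s : ℤ, s ∈ F ↔ s ∈ N := fun s => Set.Finite.mem_toFinset hNfin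
  have hmaxN : ord (P smax) h ≤ -(m:ℤ) := (hmemN smax).mp (F.max'_mem hFne)
  have hminN : ord (P smin) h ≤ -(m:ℤ) := (hmemN smin).mp (F.min'_mem hFne)
  have hmax1 : -(m:ℤ) < ord (P (smax+1)) h := by
    by_contra hle
    push_neg at hle
    have : smax + 1 ∈ F := (hmemN _).mpr hle
    have := F.le_max' _ this
    omega
  have hmin1 : -(m:ℤ) < ord (P (smin-1)) h := by
    by_contra hle
    push_neg at hle
    have : smin - 1 ∈ F := (hmemN _).mpr hle
    have := F.min'_le _ this
    omega
  -- smax = -1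
  have hsmaxeq : smax = -1 := by
    have hne : ord (P ((smax+1)-1)) h ≠ ord (P (smax+1)) h := by
      have e : smax + 1 - 1 = smax := by ring
      rw [e]; omega
    have heq := hrel2 (smax+1) hne
    have e : smax + 1 - 1 = smax := by ring
    rw [e] at heq
    have hmin : min (ord (P smax) h) (ord (P (smax+1)) h) = ord (P smax) h :=
      min_eq_left (by omega)
    rw [hmin] at heq
    by_contra hneq
    have hne0 : smax + 1 ≠ 0 := fun h0 => hneq (by omega)
    have := claimA.2 (smax+1) hne0
    omega
  -- smin = 0
  have hsmineq : smin = 0 := by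
    have hne : ord (P (smin-1)) h ≠ ord (P smin) h := by omega
    have heq := hrel2 smin hne
    have hmin : min (ord (P (smin-1)) h) (ord (P smin) h) = ord (P smin) h :=
      min_eq_right (by omega)
    rw [hmin] at heq
    by_contra hneq
    have := claimA.2 smin hneq
    omega
  have : smin ≤ smax := F.min'_le _ (F.max'_mem hFne)
  omega

end AbramovProof



/-- Minimality of the denominator in Abramov's reduction. Here `F(y,z)` is modeled
with coefficient field `E` (playing the role of `F(z) = C(x)(z)`) and `F(y,z) = E(y)`
as `RatFunc E`; `σ = σ_y` is the shift `y ↦ y + 1`, characterized on polynomials.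
If `f = σ(g) - g + a/b = σ(g') - g' + a'/b'` with `deg a < deg b`, `b` `σ_y`-free,
`gcd(a, b) = 1`, `deg a' < deg b'` and `b'` `σ_y`-free, then `deg b' ≥ deg b`. -/
theorem abramov_denominator_minimality {E : Type*} [Field E] [CharZero E]
    (σ : RatFunc E ≃+* RatFunc E)
    (hσ : ∀ p : Polynomial E, σ (algebraMap (Polynomial E) (RatFunc E) p) =
      algebraMap (Polynomial E) (RatFunc E) (p.comp (Polynomial.X + 1)))
    (f g g' : RatFunc E) (a b a' b' : Polynomial E)
    (hab : f = σ g - g +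
      algebraMap (Polynomial E) (RatFunc E) a / algebraMap (Polynomial E) (RatFunc E) b)
    (hdeg : a.degree < b.degree)
    (hbfree : ∀ l : ℤ, l ≠ 0 →
      IsCoprime b (b.comp (Polynomial.X + Polynomial.C (l : E))))
    (hgcd : IsCoprime a b)
    (hab' : f = σ g' - g' +
      algebraMap (Polynomial E) (RatFunc E) a' / algebraMap (Polynomial E) (RatFunc E) b')
    (hdeg' : a'.degree < b'.degree)
    (hbfree' : ∀ l : ℤ, l ≠ 0 →
      IsCoprime b' (b'.comp (Polynomial.X + Polynomial.C (l : E)))) :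
    b.degree ≤ b'.degree := by
  classical
  have hb : b ≠ 0 := by
    intro h0
    rw [h0, degree_zero] at hdeg
    exact not_lt_bot hdeg
  have hb' : b' ≠ 0 := by
    intro h0
    rw [h0, degree_zero] at hdeg'
    exact not_lt_bot hdeg'
  by_cases ha : a = 0
  · have hub : IsUnit b := isCoprime_zero_left.mp (ha ▸ hgcd)
    rw [degree_eq_zero_of_isUnit hub]
    exact zero_le_degree_iff.mpr hb'
  -- main case
  have hfe := hab.symm.trans hab'
  have hr : σ (g' - g) - (g' - g) =
      algebraMap (Polynomial E) (RatFunc E) a / algebraMap (Polynomial E) (RatFunc E) b -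
      algebraMap (Polynomial E) (RatFunc E) a' / algebraMap (Polynomial E) (RatFunc E) b' := by
    rw [map_sub]
    linear_combination -hfe
  set P : Finset (Polynomial E) := (normalizedFactors b).toFinset with hP
  have hmemP : ∀ p ∈ P, p ∈ normalizedFactors b := fun p hp => Multiset.mem_toFinset.mp hp
  have hirrP : ∀ p ∈ P, Irreducible p := fun p hp =>
    irreducible_of_normalized_factor p (hmemP p hp)
  have hmonP : ∀ p ∈ P, p.Monic := by
    intro p hp
    have hp0 : p ≠ 0 := (prime_of_normalized_factor p (hmemP p hp)).ne_zero
    have := monic_normalize hp0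
    rwa [normalize_normalized_factor p (hmemP p hp)] at this
  have hdvdP : ∀ p ∈ P, p ∣ b := fun p hp => dvd_of_mem_normalizedFactors (hmemP p hp)
  have H : ∀ p : Polynomial E, ∃ s : ℤ, p ∈ P →
      (AbramovProof.T ((s : ℤ) : E) p) ^ (multiplicity p b) ∣ b' := by
    intro p
    by_cases hp : p ∈ P
    · obtain ⟨s, hs⟩ := AbramovProof.key_lemma σ hσ (g' - g) a b a' b' ha hb hb' hr hgcd hbfree
        (hmonP p hp) (hirrP p hp) (hdvdP p hp)
      exact ⟨s, fun _ => hs⟩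
    · exact ⟨0, fun h => absurd h hp⟩
  choose sfun hsfun using H
  set Q : Polynomial E → Polynomial E := fun p => AbramovProof.T ((sfun p : ℤ) : E) p with hQ
  have hQdvd : ∀ p ∈ P, Q p ^ multiplicity p b ∣ b' := fun p hp => hsfun p hp
  have hQmon : ∀ p ∈ P, (Q p).Monic := fun p hp => AbramovProof.T_monic _ (hmonP p hp)
  have hQirr : ∀ p ∈ P, Irreducible (Q p) := fun p hp =>
    AbramovProof.T_irreducible _ (hirrP p hp)
  have hQnatDeg : ∀ p, (Q p).natDegree = p.natDegree := fun p => AbramovProof.T_natDegree _ _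
  have hQinj : ∀ p₁ ∈ P, ∀ p₂ ∈ P, p₁ ≠ p₂ → Q p₁ ≠ Q p₂ := by
    intro p₁ hp₁ p₂ hp₂ hne heq
    -- T s₁ p₁ = T s₂ p₂  ⇒  T (s₁ - s₂) p₁ = p₂
    have h1 : AbramovProof.T ((-(sfun p₂) : ℤ) : E) (AbramovProof.T ((sfun p₁ : ℤ) : E) p₁) =
        AbramovProof.T ((-(sfun p₂) : ℤ) : E) (AbramovProof.T ((sfun p₂ : ℤ) : E) p₂) := by
      rw [hQ] at heq
      simp only at heq
      rw [heq]
    rw [AbramovProof.T_T, AbramovProof.T_T] at h1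
    have hc2 : ((-(sfun p₂) : ℤ) : E) + ((sfun p₂ : ℤ) : E) = 0 := by push_cast; ring
    rw [hc2, AbramovProof.T_zero] at h1
    have hc1 : ((-(sfun p₂) : ℤ) : E) + ((sfun p₁ : ℤ) : E) = (((sfun p₁ - sfun p₂ : ℤ)) : E) := by
      push_cast; ring
    rw [hc1] at h1
    by_cases hss : sfun p₁ - sfun p₂ = 0
    · rw [hss] at h1
      norm_num [AbramovProof.T_zero] at h1
      exact hne (h1 ▸ rfl)
    · refine AbramovProof.shift_dvd_absurd hbfree (hirrP p₁ hp₁) (hdvdP p₁ hp₁)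
        (s := sfun p₁ - sfun p₂) ?_ hss
      rw [h1]
      exact hdvdP p₂ hp₂
  have hpair : (↑P : Set (Polynomial E)).Pairwise
      (Function.onFun IsCoprime fun p => Q p ^ multiplicity p b) := by
    intro p₁ hp₁ p₂ hp₂ hne
    have hp₁' : p₁ ∈ P := hp₁
    have hp₂' : p₂ ∈ P := hp₂
    have hnotdvd : ¬ Q p₁ ∣ Q p₂ := by
      intro hdvd
      exact hQinj p₁ hp₁' p₂ hp₂' hne
        (eq_of_monic_of_associated (hQmon p₁ hp₁') (hQmon p₂ hp₂')
          ((hQirr p₁ hp₁').associated_of_dvd (hQirr p₂ hp₂') hdvd))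
    have : IsCoprime (Q p₁) (Q p₂) := ((hQirr p₁ hp₁').coprime_iff_not_dvd).mpr hnotdvd
    exact IsCoprime.pow this
  set B : Polynomial E := ∏ p ∈ P, Q p ^ multiplicity p b with hB
  have hBdvd : B ∣ b' := Finset.prod_dvd_of_coprime hpair hQdvd
  have hBdeg : B.natDegree = ∑ p ∈ P, multiplicity p b * p.natDegree := by
    rw [hB, natDegree_prod _ _ (fun p hp => pow_ne_zero _ (hQmon p hp).ne_zero)]
    apply Finset.sum_congr rfl
    intro p hp
    rw [natDegree_pow, hQnatDeg]
  have hbdeg : b.natDegree = ∑ p ∈ P, multiplicity p b * p.natDegree := by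
    obtain ⟨u, hu⟩ := (prod_normalizedFactors hb)
    have hM0 : (normalizedFactors b).prod ≠ 0 := by
      intro h0
      rw [h0, zero_mul] at hu
      exact hb hu.symm
    have h1 : b.natDegree = (normalizedFactors b).prod.natDegree := by
      conv_lhs => rw [← hu]
      rw [natDegree_mul hM0 (Units.ne_zero u), natDegree_eq_zero_of_isUnit u.isUnit, add_zero]
    have h2 : (normalizedFactors b).prod.natDegree =
        ((normalizedFactors b).map natDegree).sum :=
      natDegree_multiset_prod_of_monic _ (fun f hf => by
        have hf0 : f ≠ 0 := (prime_of_normalized_factor f hf).ne_zero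
        have := monic_normalize hf0
        rwa [normalize_normalized_factor f hf] at this)
    have h3 : ((normalizedFactors b).map natDegree).sum =
        ∑ p ∈ P, (normalizedFactors b).count p • p.natDegree :=
      Finset.sum_multiset_map_count _ _
    have h4 : ∀ p ∈ P, (normalizedFactors b).count p = multiplicity p b := by
      intro p hp
      have hfin := FiniteMultiplicity.of_prime_left
        (prime_of_normalized_factor p (hmemP p hp)) hb
      exact count_normalizedFactors_eq (hirrP p hp)
        (normalize_normalized_factor p (hmemP p hp))
        (pow_multiplicity_dvd p b)
        (hfin.multiplicity_lt_iff_not_dvd.mp (by omega))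
    rw [h1, h2, h3]
    apply Finset.sum_congr rfl
    intro p hp
    rw [h4 p hp, smul_eq_mul]
  have hfinal : b.natDegree ≤ b'.natDegree := by
    rw [hbdeg, ← hBdeg]
    exact natDegree_le_of_dvd hBdvd hb'
  rw [degree_eq_natDegree hb, degree_eq_natDegree hb']
  exact_mod_cast hfinal
end
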